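/- arXiv:math/0611311 — 10 statements merged into one kernel-verified Lean document; each statement's English description precedes it below -/
import Mathlib

section
/- Let A be a bialgebra over a commutative ring R. There exists a normalized two-sided integral w ∈ A* if and only if there exist an R-algebra C and an R-algebra isomorphism A* ≅ R × C (product of R-algebras) under which the projection of A* onto the first factor R equals Θ, the evaluation at 1_A. -/
/-- The convolution product on the dual `A* = Hom_R(A, R)` of a bialgebra `A`:
`(f * g)(a) = Σ f(a₍₁₎) · g(a₍₂₎)`. -/
noncomputable def conv {R A : Type*} [CommRing R] [Ring A] [Bialgebra R A]
    (f g : Module.Dual R A) : Module.Dual R A :=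
  LinearMap.mul' R R ∘ₗ TensorProduct.map f g ∘ₗ Coalgebra.comul

/-- A normalized two-sided integral on a bialgebra `A`: an element `w ∈ A*` with
`f * w = w * f = f(1) • w` for all `f ∈ A*` and `w(1) = 1`. -/
def IsNormalizedIntegral {R A : Type*} [CommRing R] [Ring A] [Bialgebra R A]
    (w : Module.Dual R A) : Prop :=
  (∀ f : Module.Dual R A, conv f w = f 1 • w) ∧
  (∀ f : Module.Dual R A, conv w f = f 1 • w) ∧
  w 1 = 1

universe u v

section Aux

open scoped TensorProduct

variable {R : Type u} {A : Type v} [CommRing R] [Ring A] [Bialgebra R A]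

theorem conv_apply (f g : Module.Dual R A) (a : A) :
    conv f g a = LinearMap.mul' R R (TensorProduct.map f g (Coalgebra.comul a)) := rfl

theorem conv_one_apply (f g : Module.Dual R A) : conv f g 1 = f 1 * g 1 := by
  rw [conv_apply, Bialgebra.comul_one, Algebra.TensorProduct.one_def]
  simp

theorem conv_add_left (f f' g : Module.Dual R A) :
    conv (f + f') g = conv f g + conv f' g := by
  ext a; simp [conv_apply, TensorProduct.map_add_left]

theorem conv_add_right (f g g' : Module.Dual R A) :
    conv f (g + g') = conv f g + conv f g' := by
  ext a; simp [conv_apply, TensorProduct.map_add_right]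

theorem conv_smul_left (r : R) (f g : Module.Dual R A) :
    conv (r • f) g = r • conv f g := by
  ext a; simp [conv_apply, TensorProduct.map_smul_left]

theorem conv_smul_right (r : R) (f g : Module.Dual R A) :
    conv f (r • g) = r • conv f g := by
  ext a; simp [conv_apply, TensorProduct.map_smul_right]

theorem conv_zero_left (g : Module.Dual R A) : conv 0 g = 0 := by
  have := conv_smul_left (0 : R) 0 g
  simpa using this

theorem conv_zero_right (f : Module.Dual R A) : conv f 0 = 0 := by
  have := conv_smul_right (0 : R) f 0
  simpa using this

theorem conv_sub_left (f f' g : Module.Dual R A) :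
    conv (f - f') g = conv f g - conv f' g := by
  have h := conv_add_left (f - f') f' g
  rw [sub_add_cancel] at h
  rw [h]; abel

theorem conv_sub_right (f g g' : Module.Dual R A) :
    conv f (g - g') = conv f g - conv f g' := by
  have h := conv_add_right f (g - g') g'
  rw [sub_add_cancel] at h
  rw [h]; abel

theorem conv_counit_right (f : Module.Dual R A) : conv f Coalgebra.counit = f := by
  ext a
  have h1 := DFunLike.congr_fun
    (LinearMap.rTensor_comp_lTensor (f := f) (g := (Coalgebra.counit : A →ₗ[R] R)))
    (Coalgebra.comul a)
  rw [conv_apply, ← h1]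
  simp only [LinearMap.comp_apply, Coalgebra.lTensor_counit_comul]
  simp

theorem conv_counit_left (f : Module.Dual R A) : conv Coalgebra.counit f = f := by
  ext a
  have h1 := DFunLike.congr_fun
    (LinearMap.lTensor_comp_rTensor (f := (Coalgebra.counit : A →ₗ[R] R)) (g := f))
    (Coalgebra.comul a)
  rw [conv_apply, ← h1]
  simp only [LinearMap.comp_apply, Coalgebra.rTensor_counit_comul]
  simp

theorem aux_left (f g h : Module.Dual R A) (t : A ⊗[R] A) :
    LinearMap.mul' R R (TensorProduct.map (conv f g) h t) =
    LinearMap.mul' R R ((LinearMap.mul' R R).rTensor R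
      (TensorProduct.map (TensorProduct.map f g) h
        ((Coalgebra.comul (R := R) (A := A)).rTensor A t))) := by
  induction t with
  | zero => simp
  | tmul x y => simp [conv_apply]
  | add x y hx hy => simp only [map_add, hx, hy]

theorem aux_right (f g h : Module.Dual R A) (t : A ⊗[R] A) :
    LinearMap.mul' R R (TensorProduct.map f (conv g h) t) =
    LinearMap.mul' R R ((LinearMap.mul' R R).lTensor R
      (TensorProduct.map f (TensorProduct.map g h)
        ((Coalgebra.comul (R := R) (A := A)).lTensor A t))) := by
  induction t with
  | zero => simp
  | tmul x y => simp [conv_apply]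
  | add x y hx hy => simp only [map_add, hx, hy]

set_option synthInstance.maxHeartbeats 800000 in
theorem mulR_assoc (v : (R ⊗[R] R) ⊗[R] R) :
    LinearMap.mul' R R ((LinearMap.mul' R R).rTensor R v) =
    LinearMap.mul' R R ((LinearMap.mul' R R).lTensor R
      (TensorProduct.assoc R R R R v)) := by
  induction v with
  | zero => simp
  | tmul x y =>
    induction x with
    | zero => simp
    | tmul a b => simp [mul_assoc]
    | add a b ha hb => simp only [TensorProduct.add_tmul, map_add, ha, hb]
  | add x y hx hy => simp only [map_add, hx, hy]

theorem conv_assoc (f g h : Module.Dual R A) :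
    conv (conv f g) h = conv f (conv g h) := by
  ext a
  rw [conv_apply, conv_apply, aux_left, aux_right, mulR_assoc,
    ← TensorProduct.map_map_assoc, Coalgebra.coassoc_apply]

end Aux

theorem integral_iff_dual_splits (R : Type u) (A : Type v) [CommRing R] [Ring A]
    [Bialgebra R A] :
    (∃ w : Module.Dual R A, IsNormalizedIntegral w) ↔
    ∃ (C : Type (max u v)) (_ : Ring C) (_ : Algebra R C)
      (e : Module.Dual R A ≃ₗ[R] R × C),
        (∀ f g : Module.Dual R A, e (conv f g) = e f * e g) ∧
        e Coalgebra.counit = 1 ∧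
        (∀ f : Module.Dual R A, (e f).1 = f 1) := by
  constructor
  · rintro ⟨w, hwl, hwr, hw1⟩
    -- C = kernel of evaluation at 1
    set K : Submodule R (Module.Dual R A) :=
      { carrier := {f | f 1 = 0}
        add_mem' := fun ha hb => by simp_all
        zero_mem' := by simp
        smul_mem' := fun r f hf => by simp_all } with hK
    have memK : ∀ f : Module.Dual R A, f ∈ K ↔ f 1 = 0 := fun f => Iff.rfl
    have hcounit1 : (Coalgebra.counit : Module.Dual R A) 1 = 1 := Bialgebra.counit_one
    letI : One K := ⟨⟨Coalgebra.counit - w, by simp [memK, hcounit1, hw1]⟩⟩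
    letI : Mul K := ⟨fun f g => ⟨conv f.1 g.1, by
      rw [memK, conv_one_apply, f.2, zero_mul]⟩⟩
    have mul_def : ∀ f g : K, (f * g).1 = conv f.1 g.1 := fun _ _ => rfl
    have one_def : (1 : K).1 = Coalgebra.counit - w := rfl
    letI ringK : Ring K :=
      { (inferInstance : AddCommGroup K) with
        mul := (· * ·)
        one := 1
        left_distrib := fun a b c => Subtype.ext (conv_add_right a.1 b.1 c.1)
        right_distrib := fun a b c => Subtype.ext (conv_add_left a.1 b.1 c.1)
        zero_mul := fun a => Subtype.ext (conv_zero_left a.1)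
        mul_zero := fun a => Subtype.ext (conv_zero_right a.1)
        mul_assoc := fun a b c => Subtype.ext (conv_assoc a.1 b.1 c.1)
        one_mul := fun a => Subtype.ext (by
          rw [mul_def, one_def, conv_sub_left, conv_counit_left, hwr, a.2, zero_smul,
            sub_zero])
        mul_one := fun a => Subtype.ext (by
          rw [mul_def, one_def, conv_sub_right, conv_counit_right, hwl, a.2, zero_smul,
            sub_zero]) }
    letI algK : Algebra R K := Algebra.ofModule
      (fun r x y => Subtype.ext (conv_smul_left r x.1 y.1))
      (fun r x y => Subtype.ext (conv_smul_right r x.1 y.1))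
    refine ⟨K, ringK, algK, ?_⟩
    have hmemw : ∀ f : Module.Dual R A, f - f 1 • w ∈ K := fun f => by
      simp [memK, hw1]
    refine ⟨⟨⟨⟨fun f => (f 1, ⟨f - f 1 • w, hmemw f⟩), ?_⟩, ?_⟩,
      fun p => p.2.1 + p.1 • w, ?_, ?_⟩, ?_, ?_, fun f => rfl⟩
    · intro f g
      refine Prod.ext (by simp) (Subtype.ext ?_)
      show (f + g) - (f + g) 1 • w = (f - f 1 • w) + (g - g 1 • w)
      simp only [LinearMap.add_apply, add_smul]
      abel
    · intro r f
      refine Prod.ext (by simp) (Subtype.ext ?_)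
      show (r • f) - (r • f) 1 • w = r • (f - f 1 • w)
      simp only [LinearMap.smul_apply, smul_sub, smul_smul, smul_eq_mul]
    · intro f
      show (f - f 1 • w) + f 1 • w = f
      abel
    · rintro ⟨r, g⟩
      have hg : g.1 1 = 0 := g.2
      refine Prod.ext ?_ (Subtype.ext ?_)
      · show (g.1 + r • w) 1 = r
        simp [hg, hw1]
      · show (g.1 + r • w) - (g.1 + r • w) 1 • w = g.1
        rw [LinearMap.add_apply, hg, LinearMap.smul_apply, hw1, smul_eq_mul, mul_one,
          zero_add]
        abel
    · intro f g
      refine Prod.ext (conv_one_apply f g) (Subtype.ext ?_)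
      show conv f g - (conv f g) 1 • w = conv (f - f 1 • w) (g - g 1 • w)
      rw [conv_one_apply, conv_sub_left, conv_sub_right, conv_sub_right,
        conv_smul_left, conv_smul_right, conv_smul_left, conv_smul_right,
        hwl f, hwl w, hwr g, hw1]
      simp only [one_smul, smul_smul]
      module
    · refine Prod.ext (by simp [hcounit1]) (Subtype.ext ?_)
      show Coalgebra.counit - Coalgebra.counit 1 • w = Coalgebra.counit - w
      rw [hcounit1, one_smul]
  · rintro ⟨C, _, _, e, hmul, hone, hfst⟩
    refine ⟨e.symm (1, 0), ?_, ?_, ?_⟩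
    · intro f
      apply e.injective
      rw [hmul, map_smul, e.apply_symm_apply]
      refine Prod.ext ?_ ?_ <;> simp [hfst f]
    · intro f
      apply e.injective
      rw [hmul, map_smul, e.apply_symm_apply]
      refine Prod.ext ?_ ?_ <;> simp [hfst f]
    · rw [← hfst, e.apply_symm_apply]
end

section
/- Let A be a Hopf algebra over a commutative ring R with antipode S, and let w ∈ A* be a normalized left integral on A. Then: (i) w is also a normalized right integral (hence a normalized two-sided integral); (ii) w is the unique normalized left integral on A; and (iii) w ∘ S = w. -/
/-- A normalized left integral on a bialgebra `A`: an element `w ∈ A*` with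
`f * w = f(1) • w` for all `f ∈ A*` and `w(1) = 1`. -/
def IsNormalizedLeftIntegral {R A : Type*} [CommRing R] [Ring A] [Bialgebra R A]
    (w : Module.Dual R A) : Prop :=
  (∀ f : Module.Dual R A, conv f w = f 1 • w) ∧ w 1 = 1

/-- A normalized right integral on a bialgebra `A`: an element `w ∈ A*` with
`w * f = f(1) • w` for all `f ∈ A*` and `w(1) = 1`. -/
def IsNormalizedRightIntegral {R A : Type*} [CommRing R] [Ring A] [Bialgebra R A]
    (w : Module.Dual R A) : Prop :=
  (∀ f : Module.Dual R A, conv w f = f 1 • w) ∧ w 1 = 1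

/-!
The antipode is anti-comultiplicative, `Δ (S a) = Σ S a₍₂₎ ⊗ S a₍₁₎`: in the convolution algebra
`Hom(A, A ⊗ A)` the comultiplication has `Δ ∘ S` as a right inverse and `(S ⊗ S) ∘ τ ∘ Δ` as a
left inverse, so these agree. Applying left invariance of `w` at `S a₍₁₎` to the functional
`f(· a₍₂₎)` and expanding `Δ (S a₍₁₎)` this way shows that `w ∘ S` is a normalized right integral.
A normalized left integral `w'` and a normalized right integral `w''` always coincide, since both
equal `w'' * w'`. Hence `w ∘ S = w`, `w` is a right integral, and it is the only left one.
-/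

open TensorProduct WithConv
open Coalgebra (Repr sum_tmul_tmul_eq)
open scoped Coalgebra RingTheory.LinearMap

lemma Coalgebra.sum_counit_right_smul {R C : Type*} [CommSemiring R] [AddCommMonoid C]
    [Module R C] [Coalgebra R C] {c : C} {ι : Type*} (r : Repr R c ι) :
    ∑ i ∈ r.index, counit (R := R) (r.right i) • r.left i = c := by
  simpa only [map_sum, rid_tmul, one_smul] using
    congr(_root_.TensorProduct.rid R C $(sum_tmul_counit_eq r))

namespace HopfAlgebra

variable {R A : Type*} [CommSemiring R] [Semiring A] [HopfAlgebra R A]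

lemma sum_antipode_tmul_one_mul_comul {a : A} {ι : Type*} (r : Repr R a ι) :
    ∑ i ∈ r.index, (antipode R (r.left i) ⊗ₜ[R] (1 : A)) * δ (r.right i) = 1 ⊗ₜ a := by
  set φ : A →ₗ[R] A := μ ∘ₗ (antipode R).rTensor A ∘ₗ δ
  have hφ : φ = η ∘ₗ ε := mul_antipode_rTensor_comul
  have tmul_one_mul_eq : ∀ (u : A) (x : A ⊗[R] A), (antipode R u ⊗ₜ[R] (1 : A)) * x =
      (μ ∘ₗ (antipode R).rTensor A).rTensor A ((TensorProduct.assoc R A A A).symm (u ⊗ₜ x)) := by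
    intro u x
    induction x using TensorProduct.induction_on with
    | zero => simp
    | tmul p q => simp
    | add x y hx hy => simp only [mul_add, tmul_add, map_add, hx, hy]
  calc _ = (μ ∘ₗ (antipode R).rTensor A).rTensor A
        ((TensorProduct.assoc R A A A).symm ((δ : A →ₗ[R] A ⊗[R] A).lTensor A (δ a))) := by
        simp only [tmul_one_mul_eq, ← r.eq, map_sum, LinearMap.lTensor_tmul]
    _ = φ.rTensor A (δ a) := by
        rw [Coalgebra.coassoc_symm_apply, ← LinearMap.rTensor_comp_apply]; rfl
    _ = 1 ⊗ₜ a := by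
        rw [hφ, LinearMap.rTensor_comp_apply, Coalgebra.rTensor_counit_comul]
        simp

lemma comul_left_inv :
    toConv ((antipode R ⊗ₘ antipode R) ∘ₗ (TensorProduct.comm R A A).toLinearMap ∘ₗ δ) *
      toConv δ = 1 := by
  ext a
  let r := ℛ R a
  let Φ : A ⊗[R] (A ⊗[R] A) →ₗ[R] A ⊗[R] A := μ ∘ₗ
    ((antipode R ⊗ₘ antipode R) ∘ₗ (TensorProduct.comm R A A).toLinearMap ⊗ₘ δ) ∘ₗ
      (TensorProduct.assoc R A A A).symm.toLinearMap
  have coassoc :=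
    congr(Φ $(sum_tmul_tmul_eq r (fun i ↦ ℛ R (r.left i)) (fun i ↦ ℛ R (r.right i))))
  simp only [Φ, map_sum, LinearMap.comp_apply, LinearEquiv.coe_coe, assoc_symm_tmul, map_tmul,
    comm_tmul, LinearMap.mul'_apply] at coassoc
  rw [r.convMul_apply, LinearMap.convOne_apply]
  calc _ = ∑ i ∈ r.index, ∑ j ∈ (ℛ R (r.left i)).index,
        (antipode R ((ℛ R (r.left i)).right j) ⊗ₜ[R] antipode R ((ℛ R (r.left i)).left j)) *
          δ (r.right i) := by
        refine Finset.sum_congr rfl fun i _ ↦ ?_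
        simp [← (ℛ R (r.left i)).eq, map_sum, Finset.sum_mul]
    _ = ∑ i ∈ r.index, ∑ k ∈ (ℛ R (r.right i)).index,
        (antipode R ((ℛ R (r.right i)).left k) ⊗ₜ[R] antipode R (r.left i)) *
          δ ((ℛ R (r.right i)).right k) := coassoc
    _ = ∑ i ∈ r.index, 1 ⊗ₜ (antipode R (r.left i) * r.right i) := by
        refine Finset.sum_congr rfl fun i _ ↦ ?_
        calc _ = ∑ k ∈ (ℛ R (r.right i)).index, (1 ⊗ₜ[R] antipode R (r.left i)) *
              ((antipode R ((ℛ R (r.right i)).left k) ⊗ₜ[R] (1 : A)) *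
                δ ((ℛ R (r.right i)).right k)) :=
              Finset.sum_congr rfl fun k _ ↦ by
                rw [← mul_assoc, Algebra.TensorProduct.tmul_mul_tmul, one_mul, mul_one]
          _ = _ := by
              rw [← Finset.mul_sum, sum_antipode_tmul_one_mul_comul,
                Algebra.TensorProduct.tmul_mul_tmul, one_mul]
    _ = _ := by
        rw [← tmul_sum, sum_antipode_mul_eq_algebraMap_counit,
          Algebra.TensorProduct.algebraMap_apply, Algebra.algebraMap_eq_smul_one, smul_tmul,
          tmul_smul]

theorem comul_comp_antipode :
    δ ∘ₗ antipode R = (antipode R ⊗ₘ antipode R) ∘ₗ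
      (TensorProduct.comm R A A).toLinearMap ∘ₗ (δ : A →ₗ[R] A ⊗[R] A) :=
  congr(ofConv $(left_inv_eq_right_inv comul_left_inv LinearMap.comul_right_inv)).symm

end HopfAlgebra

def Coalgebra.Repr.antipode {R A : Type*} [CommSemiring R] [Semiring A] [HopfAlgebra R A]
    {a : A} {ι : Type*} (r : Repr R a ι) : Repr R (HopfAlgebra.antipode R a) ι where
  index := r.index
  left i := HopfAlgebra.antipode R (r.right i)
  right i := HopfAlgebra.antipode R (r.left i)
  eq := by simp [← LinearMap.comp_apply, HopfAlgebra.comul_comp_antipode, ← r.eq]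

section Bialgebra

variable {R A : Type*} [CommRing R] [Ring A] [Bialgebra R A]

lemma Coalgebra.Repr.conv_apply {a : A} {ι : Type*} (r : Repr R a ι) (f g : Module.Dual R A) :
    conv f g a = ∑ i ∈ r.index, f (r.left i) * g (r.right i) :=
  r.convMul_apply (toConv f) (toConv g)

theorem IsNormalizedLeftIntegral.eq_of_isNormalizedRightIntegral {w w' : Module.Dual R A}
    (hw' : IsNormalizedLeftIntegral w') (hw : IsNormalizedRightIntegral w) : w' = w :=
  calc w' = conv w w' := by rw [hw'.1, hw.2, one_smul]
    _ = w := by rw [hw.1, hw'.2, one_smul]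

end Bialgebra

section HopfAlgebra

open HopfAlgebra

variable {R A : Type*} [CommRing R] [Ring A] [HopfAlgebra R A]

theorem conv_comp_antipode_eq_smul {w : Module.Dual R A} (hw : ∀ f, conv f w = f 1 • w)
    (f : Module.Dual R A) : conv (w ∘ₗ antipode R) f = f 1 • (w ∘ₗ antipode R) := by
  ext x
  let r := ℛ R x
  have left_invariance : ∀ i, w (antipode R (r.left i)) * f (r.right i) =
      ∑ j ∈ (ℛ R (r.left i)).index, w (antipode R ((ℛ R (r.left i)).left j)) *
        f (antipode R ((ℛ R (r.left i)).right j) * r.right i) := by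
    intro i
    have := LinearMap.congr_fun (hw (f ∘ₗ LinearMap.mulRight R (r.right i)))
      (antipode R (r.left i))
    rw [(ℛ R (r.left i)).antipode.conv_apply] at this
    simpa [Coalgebra.Repr.antipode, mul_comm] using this.symm
  let Φ : A ⊗[R] (A ⊗[R] A) →ₗ[R] R :=
    μ ∘ₗ (w ∘ₗ antipode R ⊗ₘ f ∘ₗ μ ∘ₗ (antipode R).rTensor A)
  have coassoc :=
    congr(Φ $(sum_tmul_tmul_eq r (fun i ↦ ℛ R (r.left i)) (fun i ↦ ℛ R (r.right i))))
  simp only [Φ, map_sum, LinearMap.comp_apply, map_tmul, LinearMap.mul'_apply] at coassoc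
  calc conv (w ∘ₗ antipode R) f x
      = ∑ i ∈ r.index, w (antipode R (r.left i)) * f (r.right i) := r.conv_apply _ _
    _ = ∑ i ∈ r.index, ∑ j ∈ (ℛ R (r.left i)).index,
          w (antipode R ((ℛ R (r.left i)).left j)) *
            f (antipode R ((ℛ R (r.left i)).right j) * r.right i) :=
        Finset.sum_congr rfl fun i _ ↦ left_invariance i
    _ = ∑ i ∈ r.index, ∑ k ∈ (ℛ R (r.right i)).index, w (antipode R (r.left i)) *
          f (antipode R ((ℛ R (r.right i)).left k) * (ℛ R (r.right i)).right k) := coassoc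
    _ = ∑ i ∈ r.index,
          f 1 * w (antipode R (Coalgebra.counit (R := R) (r.right i) • r.left i)) := by
        refine Finset.sum_congr rfl fun i _ ↦ ?_
        rw [← Finset.mul_sum, ← map_sum, sum_antipode_mul_eq_smul]
        simp only [map_smul, smul_eq_mul]
        ring
    _ = (f 1 • (w ∘ₗ antipode R)) x := by
        rw [← Finset.mul_sum, ← map_sum, ← map_sum, Coalgebra.sum_counit_right_smul]
        rfl

theorem IsNormalizedLeftIntegral.comp_antipode {w : Module.Dual R A}
    (hw : IsNormalizedLeftIntegral w) : IsNormalizedRightIntegral (w ∘ₗ antipode R) :=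
  ⟨conv_comp_antipode_eq_smul hw.1, by rw [LinearMap.comp_apply, antipode_one, hw.2]⟩

end HopfAlgebra

theorem left_integral_hopf {R A : Type*} [CommRing R] [Ring A] [HopfAlgebra R A]
    (w : Module.Dual R A) (hw : IsNormalizedLeftIntegral w) :
    IsNormalizedRightIntegral w ∧
    (∀ w' : Module.Dual R A, IsNormalizedLeftIntegral w' → w' = w) ∧
    w ∘ₗ HopfAlgebra.antipode (R := R) = w := by
  have hσ : IsNormalizedRightIntegral (w ∘ₗ HopfAlgebra.antipode R) := hw.comp_antipode
  have hS : w ∘ₗ HopfAlgebra.antipode R = w := (hw.eq_of_isNormalizedRightIntegral hσ).symm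
  have hR : IsNormalizedRightIntegral w := hS ▸ hσ
  exact ⟨hR, fun w' hw' ↦ hw'.eq_of_isNormalizedRightIntegral hR, hS⟩
end

section
/- Let A be a Hopf algebra over a commutative ring R with antipode S. If w ∈ A* is a normalized left integral on A, then w ∘ S is a normalized right integral on A. -/
/-!
For a left integral `w`, left invariance applied to the functional `f (· * y)` at `x` gives
`f y * w x = (f ⊗ w) (Δ x * (y ⊗ 1))`. Hence
`(w ∘ S * f) a = Σ w (S a₁) f a₂ = (f ⊗ w) (Σ Δ (S a₁) * (a₂ ⊗ 1))`, and the Hopf identity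
`Σ Δ (S a₁) * (a₂ ⊗ 1) = 1 ⊗ S a` turns this into `f 1 * w (S a)`. That identity is computed in the
convolution algebra `Hom(A, A ⊗ A)`: `Δ ∘ S` is a left inverse of `Δ` there because `Δ` is
multiplicative, and `Δ * (1 ⊗ S) = (· ⊗ 1)` by coassociativity, so
`(Δ ∘ S) * (· ⊗ 1) = (Δ ∘ S) * Δ * (1 ⊗ S) = 1 ⊗ S`.
-/

open Coalgebra TensorProduct HopfAlgebra WithConv Algebra.TensorProduct

section HopfAlgebra

variable {R A : Type*} [CommSemiring R] [Semiring A] [HopfAlgebra R A]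

lemma mul'_map_id_includeRight_comp_antipode :
    LinearMap.mul' R (A ⊗[R] A) ∘ₗ map .id (includeRight.toLinearMap ∘ₗ antipode R) =
      (LinearMap.mul' R A ∘ₗ (antipode R).lTensor A).lTensor A ∘ₗ
        (TensorProduct.assoc R A A A).toLinearMap := by
  ext x y z
  simp

lemma comul_convMul_includeRight_comp_antipode :
    toConv comul * toConv (includeRight.toLinearMap ∘ₗ antipode R) =
      toConv (includeLeft : A →ₐ[R] A ⊗[R] A).toLinearMap := by
  calc toConv comul * toConv (includeRight.toLinearMap ∘ₗ antipode R)
      = toConv ((LinearMap.mul' R (A ⊗[R] A) ∘ₗ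
          map .id (includeRight.toLinearMap ∘ₗ antipode R)) ∘ₗ comul.rTensor A ∘ₗ comul) := by
        rw [LinearMap.convMul_def, LinearMap.comp_assoc, ← LinearMap.comp_assoc _ (comul.rTensor A),
          LinearMap.map_comp_rTensor, LinearMap.id_comp, ofConv_toConv, ofConv_toConv]
    _ = toConv ((LinearMap.mul' R A ∘ₗ (antipode R).lTensor A).lTensor A ∘ₗ
          comul.lTensor A ∘ₗ comul) := by
        rw [mul'_map_id_includeRight_comp_antipode, LinearMap.comp_assoc, ← coassoc]
    _ = toConv ((Algebra.linearMap R A ∘ₗ counit).lTensor A ∘ₗ comul) := by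
        rw [← LinearMap.comp_assoc, ← LinearMap.lTensor_comp, LinearMap.comp_assoc,
          mul_antipode_lTensor_comul]
    _ = toConv (includeLeft : A →ₐ[R] A ⊗[R] A).toLinearMap := by
        congr 1
        ext a
        rw [LinearMap.lTensor_comp, LinearMap.comp_apply, LinearMap.comp_apply,
          lTensor_counit_comul]
        simp

lemma comul_comp_antipode_convMul_comul :
    toConv (comul ∘ₗ antipode R) * toConv (comul (R := R) (A := A)) = 1 := by
  calc toConv (comul ∘ₗ antipode R) * toConv comul
      = toConv ((Bialgebra.comulAlgHom R A).toLinearMap ∘ₗ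
          (toConv (antipode R) * toConv (LinearMap.id : A →ₗ[R] A)).ofConv) := by
        rw [LinearMap.algHom_comp_convMul_distrib]
        rfl
    _ = 1 := by
        rw [LinearMap.antipode_mul_id]
        ext a
        simp

lemma comul_comp_antipode_convMul_includeLeft :
    toConv (comul ∘ₗ antipode R) * toConv (includeLeft : A →ₐ[R] A ⊗[R] A).toLinearMap =
      toConv (includeRight.toLinearMap ∘ₗ antipode R) := by
  rw [← comul_convMul_includeRight_comp_antipode, ← mul_assoc,
    comul_comp_antipode_convMul_comul, one_mul]

lemma mul'_map_comul_comp_antipode_includeLeft_comul (a : A) :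
    LinearMap.mul' R (A ⊗[R] A) (map (comul ∘ₗ antipode R) includeLeft.toLinearMap (comul a)) =
      1 ⊗ₜ antipode R a :=
  congr($comul_comp_antipode_convMul_includeLeft a)

end HopfAlgebra

section Integral

variable {R A : Type*} [CommRing R] [Ring A] [HopfAlgebra R A]

lemma mul'_map_comul_mul_tmul_one_of_conv_eq_smul {w : Module.Dual R A}
    (hw : ∀ f, conv f w = f 1 • w) (f : Module.Dual R A) (x y : A) :
    LinearMap.mul' R R (map f w (comul x * (y ⊗ₜ 1))) = f y * w x := by
  have h := LinearMap.congr_fun (hw (f ∘ₗ LinearMap.mulRight R y)) x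
  rw [← LinearMap.mulRight_apply (R := R), LinearMap.mulRight_tmul, LinearMap.mulRight_one,
    ← LinearMap.comp_apply (map f w), ← TensorProduct.map_comp, LinearMap.comp_id]
  simpa [conv] using h

end Integral

theorem left_integral_comp_antipode {R A : Type*} [CommRing R] [Ring A] [HopfAlgebra R A]
    (w : Module.Dual R A) (hw : IsNormalizedLeftIntegral w) :
    IsNormalizedRightIntegral (w ∘ₗ HopfAlgebra.antipode (R := R)) := by
  obtain ⟨hleft, hone⟩ := hw
  refine ⟨fun f => ?_, by simp [hone]⟩
  have hsplit : LinearMap.mul' R R ∘ₗ map (w ∘ₗ antipode R) f =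
      LinearMap.mul' R R ∘ₗ map f w ∘ₗ
        LinearMap.mul' R (A ⊗[R] A) ∘ₗ map (comul ∘ₗ antipode R) includeLeft.toLinearMap := by
    ext x y
    simp [mul'_map_comul_mul_tmul_one_of_conv_eq_smul hleft, mul_comm]
  ext a
  calc conv (w ∘ₗ antipode R) f a
      = LinearMap.mul' R R (map f w (LinearMap.mul' R (A ⊗[R] A)
          (map (comul ∘ₗ antipode R) includeLeft.toLinearMap (comul a)))) :=
        congr($hsplit (comul a))
    _ = f 1 * w (antipode R a) := by
        rw [mul'_map_comul_comp_antipode_includeLeft_comul]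
        simp
end

section
/- Let A be a bialgebra over a commutative ring R, let w ∈ A* be a normalized two-sided integral on A, and let M be a left module over the convolution algebra A*. Then M^inv equals w • M := {w • m : m ∈ M}, M^inv is an A*-submodule of M, and M is the internal direct sum of the A*-submodules w • M and (ε − w) • M; explicitly, every m ∈ M decomposes uniquely as m = w • m + (ε − w) • m with w • m ∈ M^inv. -/
/-- A structure of left module over the convolution algebra `A*` on an `R`-module `M`:
an `R`-bilinear action of `A*` on `M` which is unital (the counit `ε` is the unit of the
convolution algebra) and associative for the convolution product. -/
structure ConvModuleStruct (R A M : Type*) [CommRing R] [Ring A] [Bialgebra R A]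
    [AddCommGroup M] [Module R M] where
  smul : Module.Dual R A →ₗ[R] M →ₗ[R] M
  counit_smul : ∀ m : M, smul Coalgebra.counit m = m
  conv_smul : ∀ (f g : Module.Dual R A) (m : M),
    smul (conv f g) m = smul f (smul g m)

/-- The invariants `M^inv` of a module `M` over the convolution algebra `A*`:
those `m` with `f • m = f(1) • m` for all `f ∈ A*`. -/
def ConvModuleStruct.inv {R A M : Type*} [CommRing R] [Ring A] [Bialgebra R A]
    [AddCommGroup M] [Module R M] (μ : ConvModuleStruct R A M) : Set M :=
  {m : M | ∀ f : Module.Dual R A, μ.smul f m = f 1 • m}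


/-
Associativity of the action turns the integral identity `f * w = f(1) • w` into
`f • (w • m) = f(1) • (w • m)`, so `w • M ⊆ M^inv`, and `w(1) = 1` makes `w` act as the identity
on `M^inv`. The integral identities with `f = w` make `w` idempotent, so `w` and `ε - w` act as
complementary projections, and `(ε - w) • M` is the kernel of `w •`; the identity
`w * f = f(1) • w` shows that this kernel is `A*`-stable.
-/

theorem IsNormalizedIntegral.conv_self {R A : Type*} [CommRing R] [Ring A] [Bialgebra R A]
    {w : Module.Dual R A} (hw : IsNormalizedIntegral w) : conv w w = w := by
  rw [hw.1 w, hw.2.2, one_smul]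

namespace ConvModuleStruct

variable {R A M : Type*} [CommRing R] [Ring A] [Bialgebra R A] [AddCommGroup M] [Module R M]
  (μ : ConvModuleStruct R A M)

def invSubmodule : Submodule R M where
  carrier := μ.inv
  zero_mem' f := by rw [map_zero, smul_zero]
  add_mem' hm hm' f := by rw [map_add, hm f, hm' f, smul_add]
  smul_mem' r m hm f := by rw [map_smul, hm f, smul_comm]

theorem smul_mem_inv {m : M} (hm : m ∈ μ.inv) (f : Module.Dual R A) : μ.smul f m ∈ μ.inv := by
  rw [hm f]
  exact μ.invSubmodule.smul_mem (f 1) hm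

theorem smul_mem_inv_of_conv_left {w : Module.Dual R A}
    (hleft : ∀ f : Module.Dual R A, conv f w = f 1 • w) (m : M) : μ.smul w m ∈ μ.inv := by
  intro f
  rw [← μ.conv_smul, hleft, map_smul, LinearMap.smul_apply]

theorem inv_eq_range_smul {w : Module.Dual R A}
    (hleft : ∀ f : Module.Dual R A, conv f w = f 1 • w) (hw1 : w 1 = 1) :
    μ.inv = Set.range (μ.smul w) := by
  ext m
  refine ⟨fun hm => ⟨m, ?_⟩, ?_⟩
  · rw [hm w, hw1, one_smul]
  · rintro ⟨y, rfl⟩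
    exact μ.smul_mem_inv_of_conv_left hleft y

theorem smul_counit_sub (e : Module.Dual R A) (m : M) :
    μ.smul (Coalgebra.counit - e) m = m - μ.smul e m := by
  rw [map_sub, LinearMap.sub_apply, μ.counit_smul]

theorem smul_add_smul_counit_sub (e : Module.Dual R A) (m : M) :
    μ.smul e m + μ.smul (Coalgebra.counit - e) m = m := by
  rw [smul_counit_sub, add_sub_cancel]

section Idempotent

variable {e : Module.Dual R A}

theorem smul_smul_of_conv_self (he : conv e e = e) (m : M) :
    μ.smul e (μ.smul e m) = μ.smul e m := by
  rw [← μ.conv_smul, he]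

theorem smul_eq_self_of_mem_range (he : conv e e = e) {m : M} (hm : m ∈ Set.range (μ.smul e)) :
    μ.smul e m = m := by
  obtain ⟨y, rfl⟩ := hm
  exact μ.smul_smul_of_conv_self he y

theorem range_smul_counit_sub_eq (he : conv e e = e) :
    Set.range (μ.smul (Coalgebra.counit - e)) = {m : M | μ.smul e m = 0} := by
  ext m
  refine ⟨?_, fun hm => ⟨m, by rw [smul_counit_sub, (hm : μ.smul e m = 0), sub_zero]⟩⟩
  rintro ⟨y, rfl⟩
  show μ.smul e _ = 0
  rw [smul_counit_sub, map_sub, μ.smul_smul_of_conv_self he, sub_self]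

theorem eq_smul_of_eq_add (he : conv e e = e) {m m₁ m₂ : M} (h₁ : m₁ ∈ Set.range (μ.smul e))
    (h₂ : m₂ ∈ Set.range (μ.smul (Coalgebra.counit - e))) (h : m = m₁ + m₂) :
    m₁ = μ.smul e m ∧ m₂ = μ.smul (Coalgebra.counit - e) m := by
  rw [μ.range_smul_counit_sub_eq he] at h₂
  have hm₁ : μ.smul e m = m₁ := by
    rw [h, map_add, μ.smul_eq_self_of_mem_range he h₁, (h₂ : μ.smul e m₂ = 0), add_zero]
  refine ⟨hm₁.symm, ?_⟩
  rw [smul_counit_sub, hm₁, h, add_sub_cancel_left]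

end Idempotent

theorem smul_smul_eq_zero_of_conv_right {w : Module.Dual R A}
    (hright : ∀ f : Module.Dual R A, conv w f = f 1 • w) {m : M} (hm : μ.smul w m = 0)
    (f : Module.Dual R A) : μ.smul w (μ.smul f m) = 0 := by
  rw [← μ.conv_smul, hright, map_smul, LinearMap.smul_apply, hm, smul_zero]

end ConvModuleStruct

theorem invariants_eq_and_direct_sum {R A M : Type*} [CommRing R] [Ring A] [Bialgebra R A]
    [AddCommGroup M] [Module R M] (μ : ConvModuleStruct R A M)
    (w : Module.Dual R A) (hw : IsNormalizedIntegral w) :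
    -- `M^inv = w • M`
    (μ.inv = Set.range (μ.smul w)) ∧
    -- `M^inv` is an `A*`-submodule of `M`
    ((0 : M) ∈ μ.inv ∧ (∀ m m' : M, m ∈ μ.inv → m' ∈ μ.inv → m + m' ∈ μ.inv) ∧
      (∀ (r : R) (m : M), m ∈ μ.inv → r • m ∈ μ.inv) ∧
      (∀ (f : Module.Dual R A) (m : M), m ∈ μ.inv → μ.smul f m ∈ μ.inv)) ∧
    -- `w • M` and `(ε - w) • M` are `A*`-submodules
    (∀ (f : Module.Dual R A) (m : M), m ∈ Set.range (μ.smul w) →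
      μ.smul f m ∈ Set.range (μ.smul w)) ∧
    (∀ (f : Module.Dual R A) (m : M), m ∈ Set.range (μ.smul (Coalgebra.counit - w)) →
      μ.smul f m ∈ Set.range (μ.smul (Coalgebra.counit - w))) ∧
    -- every `m` decomposes as `m = w • m + (ε - w) • m` with `w • m ∈ M^inv`
    (∀ m : M, m = μ.smul w m + μ.smul (Coalgebra.counit - w) m ∧ μ.smul w m ∈ μ.inv) ∧
    -- the decomposition is unique (`M` is the internal direct sum)
    (∀ (m m₁ m₂ : M), m₁ ∈ Set.range (μ.smul w) →
      m₂ ∈ Set.range (μ.smul (Coalgebra.counit - w)) → m = m₁ + m₂ →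
      m₁ = μ.smul w m ∧ m₂ = μ.smul (Coalgebra.counit - w) m) := by
  have hidem := hw.conv_self
  obtain ⟨hleft, hright, hw1⟩ := hw
  have hinv := μ.inv_eq_range_smul hleft hw1
  refine ⟨hinv, ⟨μ.invSubmodule.zero_mem, fun _ _ => μ.invSubmodule.add_mem,
    fun r _ => μ.invSubmodule.smul_mem r, fun f _ hm => μ.smul_mem_inv hm f⟩, ?_, ?_,
    fun m => ⟨(μ.smul_add_smul_counit_sub w m).symm, μ.smul_mem_inv_of_conv_left hleft m⟩,
    fun _ _ _ => μ.eq_smul_of_eq_add hidem⟩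
  · rw [← hinv]
    exact fun f _ hm => μ.smul_mem_inv hm f
  · rw [μ.range_smul_counit_sub_eq hidem]
    exact fun f _ hm => μ.smul_smul_eq_zero_of_conv_right hright hm f
end

section
/- Let A be a bialgebra over a commutative ring R, let w ∈ A* be a normalized two-sided integral on A, and let M be a left module over the convolution algebra A*. If N is an A*-submodule of M such that M is the internal direct sum of M^inv and N, then N = (ε − w) • M. In other words, the complement of M^inv in the direct sum decomposition of M into A*-submodules is unique. -/
theorem complement_unique {R A M : Type*} [CommRing R] [Ring A] [Bialgebra R A]
    [AddCommGroup M] [Module R M] (μ : ConvModuleStruct R A M)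
    (w : Module.Dual R A) (hw : IsNormalizedIntegral w)
    (N : Submodule R M)
    -- `N` is an `A*`-submodule of `M`
    (hN : ∀ (f : Module.Dual R A), ∀ n ∈ N, μ.smul f n ∈ N)
    -- `M` is the internal direct sum of `M^inv` and `N`
    (hsum : ∀ m : M, ∃ m₁ ∈ μ.inv, ∃ n ∈ N, m = m₁ + n)
    (hdisj : ∀ m ∈ N, m ∈ μ.inv → m = 0) :
    (N : Set M) = Set.range (μ.smul (Coalgebra.counit - w)) := by
  have hwinv : ∀ m : M, μ.smul w m ∈ μ.inv := by
    intro m f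
    rw [← μ.conv_smul, hw.1 f, map_smul, LinearMap.smul_apply]
  have hzero : ∀ n ∈ N, μ.smul w n = 0 := fun n hn => hdisj _ (hN w n hn) (hwinv n)
  have hsub : ∀ m : M, μ.smul (Coalgebra.counit - w) m = m - μ.smul w m := by
    intro m
    rw [map_sub, LinearMap.sub_apply, μ.counit_smul]
  ext m
  constructor
  · intro hm
    exact ⟨m, by rw [hsub, hzero m hm, sub_zero]⟩
  · rintro ⟨x, rfl⟩
    obtain ⟨m₁, h₁, n, hn, rfl⟩ := hsum x
    rw [hsub, (μ.smul w).map_add, h₁ w, hw.2.2, one_smul, hzero n hn, add_zero,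
      add_sub_cancel_left]
    exact hn
end

section
/- Let A be a bialgebra over a commutative ring R admitting a normalized two-sided integral w ∈ A*. Then taking invariants is exact on modules over the convolution algebra A*: if φ : M → N is a surjective homomorphism of left A*-modules, then φ maps M^inv onto N^inv; consequently, for every short exact sequence 0 → M₁ → M₂ → M₃ → 0 of left A*-modules, the induced sequence 0 → M₁^inv → M₂^inv → M₃^inv → 0 is exact. -/
/-!
Averaging against the integral is a projection onto the invariants: for any `m`, the element
`w • m` is invariant because `f * w = f(1) • w`, and `w • m = w(1) • m = m` when `m` is already
invariant. Since an `A*`-linear surjection `φ` commutes with this projection, an invariant `n = φ m`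
equals `w • n = φ (w • m)` and so lifts to the invariant `w • m`. The remaining exactness
statements only use that `A*`-linear maps preserve invariants and that injective ones reflect them.
-/

namespace ConvModuleStruct

variable {R A : Type*} [CommRing R] [Ring A] [Bialgebra R A]
  {M N : Type*} [AddCommGroup M] [Module R M] [AddCommGroup N] [Module R N]
  (μ : ConvModuleStruct R A M) (ν : ConvModuleStruct R A N)

lemma smul_mem_inv_of_conv_eq {w : Module.Dual R A}
    (hw : ∀ f : Module.Dual R A, conv f w = f 1 • w) (m : M) :
    μ.smul w m ∈ μ.inv := by
  intro f
  rw [← μ.conv_smul, hw f, map_smul, LinearMap.smul_apply]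

lemma smul_eq_self_of_mem_inv {w : Module.Dual R A} (hw : w 1 = 1) {m : M} (hm : m ∈ μ.inv) :
    μ.smul w m = m := by
  rw [hm w, hw, one_smul]

variable {μ ν} {φ : M →ₗ[R] N}
  (hφ : ∀ (f : Module.Dual R A) (m : M), φ (μ.smul f m) = ν.smul f (φ m))
include hφ

lemma map_mem_inv {m : M} (hm : m ∈ μ.inv) : φ m ∈ ν.inv := by
  intro f
  rw [← hφ, hm f, map_smul]

lemma mem_inv_of_map_mem_inv (hinj : Function.Injective φ) {m : M} (hm : φ m ∈ ν.inv) :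
    m ∈ μ.inv := by
  intro f
  apply hinj
  rw [hφ, hm f, map_smul]

lemma exists_mem_inv_map_eq {w : Module.Dual R A} (hw : IsNormalizedIntegral w)
    (hsurj : Function.Surjective φ) {n : N} (hn : n ∈ ν.inv) : ∃ m ∈ μ.inv, φ m = n := by
  obtain ⟨m, rfl⟩ := hsurj n
  exact ⟨μ.smul w m, μ.smul_mem_inv_of_conv_eq hw.1 m, by
    rw [hφ, ν.smul_eq_self_of_mem_inv hw.2.2 hn]⟩

end ConvModuleStruct

open ConvModuleStruct

theorem invariants_exact {R A : Type*} [CommRing R] [Ring A] [Bialgebra R A]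
    (w : Module.Dual R A) (hw : IsNormalizedIntegral w)
    -- a surjective homomorphism of `A*`-modules `φ : M → N`
    {M N : Type*} [AddCommGroup M] [Module R M] [AddCommGroup N] [Module R N]
    (μ : ConvModuleStruct R A M) (ν : ConvModuleStruct R A N)
    (φ : M →ₗ[R] N) (hφ : ∀ (f : Module.Dual R A) (m : M), φ (μ.smul f m) = ν.smul f (φ m))
    (hφsurj : Function.Surjective φ)
    -- a short exact sequence `0 → M₁ → M₂ → M₃ → 0` of `A*`-modules
    {M₁ M₂ M₃ : Type*} [AddCommGroup M₁] [Module R M₁] [AddCommGroup M₂] [Module R M₂]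
    [AddCommGroup M₃] [Module R M₃]
    (μ₁ : ConvModuleStruct R A M₁) (μ₂ : ConvModuleStruct R A M₂)
    (μ₃ : ConvModuleStruct R A M₃)
    (i : M₁ →ₗ[R] M₂) (p : M₂ →ₗ[R] M₃)
    (hi : ∀ (f : Module.Dual R A) (m : M₁), i (μ₁.smul f m) = μ₂.smul f (i m))
    (hp : ∀ (f : Module.Dual R A) (m : M₂), p (μ₂.smul f m) = μ₃.smul f (p m))
    (hiinj : Function.Injective i) (hpsurj : Function.Surjective p)
    (hex : LinearMap.range i = LinearMap.ker p) :
    -- `φ` maps `M^inv` onto `N^inv`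
    (∀ n ∈ ν.inv, ∃ m ∈ μ.inv, φ m = n) ∧
    -- the induced sequence `0 → M₁^inv → M₂^inv → M₃^inv → 0` is exact
    ((∀ m ∈ μ₁.inv, i m ∈ μ₂.inv) ∧
     (∀ m ∈ μ₂.inv, p m ∈ μ₃.inv) ∧
     (∀ m₁ ∈ μ₁.inv, ∀ m₁' ∈ μ₁.inv, i m₁ = i m₁' → m₁ = m₁') ∧
     (∀ m₂ ∈ μ₂.inv, p m₂ = 0 → ∃ m₁ ∈ μ₁.inv, i m₁ = m₂) ∧
     (∀ m₁ ∈ μ₁.inv, p (i m₁) = 0) ∧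
     (∀ m₃ ∈ μ₃.inv, ∃ m₂ ∈ μ₂.inv, p m₂ = m₃)) := by
  refine ⟨fun n hn => exists_mem_inv_map_eq hφ hw hφsurj hn,
    fun m hm => map_mem_inv hi hm, fun m hm => map_mem_inv hp hm,
    fun m₁ _ m₁' _ h => hiinj h, ?_, ?_,
    fun m₃ hm₃ => exists_mem_inv_map_eq hp hw hpsurj hm₃⟩
  · intro m₂ hm₂ hpm₂
    obtain ⟨m₁, rfl⟩ : m₂ ∈ LinearMap.range i := hex ▸ hpm₂
    exact ⟨m₁, mem_inv_of_map_mem_inv hi hiinj hm₂, rfl⟩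
  · intro m₁ _
    exact (hex ▸ LinearMap.mem_range_self i m₁ : i m₁ ∈ LinearMap.ker p)
end

section
/- Let A be a bialgebra over a commutative ring R and let x ∈ A be a grouplike element. There exists a normalized two-sided x-semi-invariant integral on A if and only if there exist an R-algebra C and an R-algebra isomorphism A* ≅ R × C (product of R-algebras) under which the projection of A* onto the first factor R equals χ, the evaluation at x (χ(f) = f(x)). -/
/-!
Under convolution `A*` is an `R`-algebra, and evaluation at the grouplike `x` is an algebra map
`χ : A* → R`. A normalized semi-invariant integral `w` satisfies `f * w = w * f = χ f • w` and
`χ w = 1`, so it is a central idempotent; `f ↦ (χ f, f - χ f • w)` then splits `A*` as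
`R × ker χ`, where `ker χ` is a ring with unit `ε - w`. Conversely, for a splitting
`A* ≃ R × C` whose first projection is `χ`, the preimage of `(1, 0)` is such an integral.
-/

open TensorProduct

/-- An element `x` of a bialgebra is grouplike if `Δ x = x ⊗ x` and `ε x = 1`. -/
def IsGroupLikeElem' (R : Type*) {A : Type*} [CommRing R] [Ring A] [Bialgebra R A]
    (x : A) : Prop :=
  Coalgebra.comul (R := R) x = x ⊗ₜ[R] x ∧ Coalgebra.counit (R := R) x = 1

/-- For `x` grouplike, a normalized two-sided `x`-semi-invariant integral on `A` is
`w ∈ A*` with `f * w = w * f = f(x) • w` for all `f ∈ A*` and `w(x) = 1`. -/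
def IsNormalizedSemiInvIntegral {R A : Type*} [CommRing R] [Ring A] [Bialgebra R A]
    (x : A) (w : Module.Dual R A) : Prop :=
  (∀ f : Module.Dual R A, conv f w = f x • w) ∧
  (∀ f : Module.Dual R A, conv w f = f x • w) ∧
  w x = 1

universe u v

variable {R D : Type*} [CommRing R] [Ring D] [Algebra R D]

structure IsNormalizedIntegral_s10 (χ : D →ₐ[R] R) (w : D) : Prop where
  mul_left : ∀ d, d * w = χ d • w
  mul_right : ∀ d, w * d = χ d • w
  map_eq_one : χ w = 1

abbrev AlgHom.kerNonUnitalSubalgebra (χ : D →ₐ[R] R) : NonUnitalSubalgebra R D :=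
  NonUnitalSubalgebra.comap χ ⊥

lemma AlgHom.mem_kerNonUnitalSubalgebra {χ : D →ₐ[R] R} {d : D} :
    d ∈ χ.kerNonUnitalSubalgebra ↔ χ d = 0 :=
  NonUnitalAlgebra.mem_bot

namespace IsNormalizedIntegral_s10

open AlgHom

variable {χ : D →ₐ[R] R} {w : D} (hw : IsNormalizedIntegral_s10 χ w)
include hw

lemma mul_eq_zero_of_map_eq_zero_left {d : D} (hd : χ d = 0) : d * w = 0 := by
  rw [hw.mul_left, hd, zero_smul]

lemma mul_eq_zero_of_map_eq_zero_right {d : D} (hd : χ d = 0) : w * d = 0 := by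
  rw [hw.mul_right, hd, zero_smul]

lemma map_sub_smul (d : D) : χ (d - χ d • w) = 0 := by
  rw [map_sub, map_smul, hw.map_eq_one, smul_eq_mul, mul_one, sub_self]

lemma sub_smul_mul_sub_smul (d e : D) :
    (d - χ d • w) * (e - χ e • w) = d * e - χ (d * e) • w := calc
  _ = (d - χ d • w) * e := by
    rw [mul_sub, mul_smul_comm, hw.mul_eq_zero_of_map_eq_zero_left (hw.map_sub_smul d),
      smul_zero, sub_zero]
  _ = d * e - χ (d * e) • w := by rw [sub_mul, smul_mul_assoc, hw.mul_right, smul_smul, map_mul]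

omit hw in
def Ker (_ : IsNormalizedIntegral_s10 χ w) : Type _ := χ.kerNonUnitalSubalgebra

instance : NonUnitalRing hw.Ker := inferInstanceAs (NonUnitalRing χ.kerNonUnitalSubalgebra)

instance : Module R hw.Ker := inferInstanceAs (Module R χ.kerNonUnitalSubalgebra)

instance : Ring hw.Ker where
  one := ⟨1 - w, mem_kerNonUnitalSubalgebra.2 (by simpa using hw.map_sub_smul 1)⟩
  one_mul d := Subtype.ext <| by
    change (1 - w) * d.1 = d.1
    rw [sub_mul, one_mul,
      hw.mul_eq_zero_of_map_eq_zero_right (mem_kerNonUnitalSubalgebra.1 d.2), sub_zero]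
  mul_one d := Subtype.ext <| by
    change d.1 * (1 - w) = d.1
    rw [mul_sub, mul_one,
      hw.mul_eq_zero_of_map_eq_zero_left (mem_kerNonUnitalSubalgebra.1 d.2), sub_zero]

instance : Algebra R hw.Ker :=
  .ofModule (fun r x y => Subtype.ext (smul_mul_assoc r x.1 y.1))
    (fun r x y => Subtype.ext (mul_smul_comm r x.1 y.1))

noncomputable def kerSplitting : D ≃ₐ[R] R × hw.Ker where
  toFun d := (χ d, ⟨d - χ d • w, mem_kerNonUnitalSubalgebra.2 (hw.map_sub_smul d)⟩)
  invFun p := p.1 • w + p.2.1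
  left_inv d := add_sub_cancel _ d
  right_inv p := by
    have hp : χ p.2.1 = 0 := mem_kerNonUnitalSubalgebra.1 p.2.2
    refine Prod.ext ?_ (Subtype.ext ?_) <;> simp [hw.map_eq_one, hp]
  map_mul' d e := Prod.ext (map_mul χ d e) (Subtype.ext (hw.sub_smul_mul_sub_smul d e).symm)
  map_add' d e := Prod.ext (map_add χ d e) (Subtype.ext <| by
    change d + e - χ (d + e) • w = (d - χ d • w) + (e - χ e • w)
    rw [map_add, add_smul]; abel)
  commutes' r := Prod.ext (χ.commutes r) (Subtype.ext <| by
    change algebraMap R D r - χ (algebraMap R D r) • w = r • (1 - w)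
    rw [χ.commutes, Algebra.algebraMap_eq_smul_one, smul_sub, Algebra.algebraMap_self_apply])

lemma kerSplitting_apply_fst (d : D) : (hw.kerSplitting d).1 = χ d := rfl

end IsNormalizedIntegral_s10

lemma AlgEquiv.isNormalizedIntegral_symm_one_zero {C : Type*} [Ring C] [Algebra R C]
    {χ : D →ₐ[R] R} (e : D ≃ₐ[R] R × C) (he : ∀ d, (e d).1 = χ d) :
    IsNormalizedIntegral_s10 χ (e.symm (1, 0)) := by
  refine ⟨fun d => e.injective ?_, fun d => e.injective ?_, by rw [← he, e.apply_symm_apply]⟩ <;>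
  · rw [map_mul, map_smul, e.apply_symm_apply]
    ext <;> simp [he]

open WithConv

noncomputable def IsGroupLikeElem.convEval {A : Type*} [AddCommMonoid A] [Module R A]
    [Coalgebra R A] {x : A} (hx : IsGroupLikeElem R x) :
    WithConv (Module.Dual R A) →ₐ[R] R where
  toFun f := f x
  map_one' := by simp [hx]
  map_mul' f g := by simp [hx]
  map_zero' := rfl
  map_add' _ _ := rfl
  commutes' r := by simp [hx]

section Bialgebra

variable {A : Type*} [Ring A] [Bialgebra R A] {x : A}

lemma IsGroupLikeElem'.isGroupLikeElem (hx : IsGroupLikeElem' R x) : IsGroupLikeElem R x :=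
  ⟨hx.2, hx.1⟩

lemma isNormalizedSemiInvIntegral_iff (hx : IsGroupLikeElem R x) {w : Module.Dual R A} :
    IsNormalizedSemiInvIntegral x w ↔ IsNormalizedIntegral_s10 hx.convEval (toConv w) :=
  ⟨fun ⟨hl, hr, h1⟩ =>
      ⟨fun d => WithConv.ext (hl d.ofConv), fun d => WithConv.ext (hr d.ofConv), h1⟩,
    fun ⟨hl, hr, h1⟩ => ⟨fun f => congrArg ofConv (hl (toConv f)),
      fun f => congrArg ofConv (hr (toConv f)), h1⟩⟩

end Bialgebra

theorem semiinvariant_integral_iff_dual_splits (R : Type u) (A : Type v) [CommRing R]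
    [Ring A] [Bialgebra R A] (x : A) (hx : IsGroupLikeElem' R x) :
    (∃ w : Module.Dual R A, IsNormalizedSemiInvIntegral x w) ↔
    ∃ (C : Type (max u v)) (_ : Ring C) (_ : Algebra R C)
      (e : Module.Dual R A ≃ₗ[R] R × C),
        (∀ f g : Module.Dual R A, e (conv f g) = e f * e g) ∧
        e Coalgebra.counit = 1 ∧
        (∀ f : Module.Dual R A, (e f).1 = f x) := by
  replace hx := hx.isGroupLikeElem
  constructor
  · rintro ⟨w, hw⟩
    replace hw := (isNormalizedSemiInvIntegral_iff hx).1 hw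
    exact ⟨hw.Ker, inferInstance, inferInstance,
      (WithConv.linearEquiv R _).symm.trans hw.kerSplitting.toLinearEquiv,
      fun f g => map_mul hw.kerSplitting (toConv f) (toConv g), map_one hw.kerSplitting,
      fun f => hw.kerSplitting_apply_fst (toConv f)⟩
  · rintro ⟨C, _, _, e, he_mul, he_one, he_fst⟩
    let e' : WithConv (Module.Dual R A) ≃ₐ[R] R × C :=
      .ofLinearEquiv ((WithConv.linearEquiv R _).trans e) he_one fun f g => he_mul f.ofConv g.ofConv
    exact ⟨(e'.symm (1, 0)).ofConv, (isNormalizedSemiInvIntegral_iff hx).2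
      (e'.isNormalizedIntegral_symm_one_zero fun d => he_fst d.ofConv)⟩
end

section
/- Let k be a field, n a natural number, and S = k[x₁,…,xₙ] the polynomial ring (MvPolynomial over Fin n) with its standard grading. Let R ⊆ S be a k-subalgebra and let ρ : S → S be a k-linear map such that: ρ(s) ∈ R for all s ∈ S; ρ(r) = r for all r ∈ R; ρ(r·s) = r·ρ(s) for all r ∈ R and s ∈ S; and ρ maps each homogeneous polynomial of degree d to a homogeneous polynomial of degree d. Then R is a finitely generated k-algebra. -/
/-! Hilbert's argument. Since `ρ` preserves degrees, it commutes with taking homogeneous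
components, so `R` is a graded subalgebra. As `S` is Noetherian, the ideal of `S` generated by
the homogeneous elements of `R` of positive degree is generated by finitely many of them,
`t₁, …, tₘ`. Applying `ρ` to `r = ∑ sᵢ tᵢ` gives `r = ∑ ρ(sᵢ) tᵢ` with `ρ(sᵢ) ∈ R`, and taking
degree-`d` components writes a homogeneous `r ∈ R` of degree `d` through the `tᵢ` and elements
of `R` of smaller degree; induction on `d` gives `R = k[t₁, …, tₘ]`. -/

open DirectSum

section Decomposition

variable {ι k M : Type*} [DecidableEq ι] [CommSemiring k] [AddCommMonoid M] [Module k M]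
  (ℳ : ι → Submodule k M) [Decomposition ℳ] {f : M →ₗ[k] M}

theorem coe_decompose_map_of_mapsTo (hf : ∀ i, ∀ m ∈ ℳ i, f m ∈ ℳ i) (m : M) (i : ι) :
    (decompose ℳ (f m) i : M) = f (decompose ℳ m i) := by
  induction m using Decomposition.inductionOn ℳ with
  | zero => simp
  | @homogeneous j m =>
    by_cases hji : j = i
    · subst hji
      rw [decompose_of_mem_same ℳ (hf j m m.2), decompose_coe, of_eq_same]
    · rw [decompose_of_mem_ne ℳ (hf j m m.2) hji, decompose_of_mem_ne ℳ m.2 hji, map_zero]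
  | add m m' hm hm' =>
    simp only [map_add, decompose_add, DirectSum.add_apply, Submodule.coe_add, hm, hm']

theorem Submodule.isHomogeneous_of_isProjection {p : Submodule k M}
    (hf : ∀ i, ∀ m ∈ ℳ i, f m ∈ ℳ i) (hfp : ∀ m, f m ∈ p) (hfid : ∀ m ∈ p, f m = m) :
    SetLike.IsHomogeneous ℳ p := by
  intro i m hm
  rw [← hfid m hm, coe_decompose_map_of_mapsTo ℳ hf]
  exact hfp _

end Decomposition

section Graded

variable {k S : Type*} [CommSemiring k] [CommSemiring S] [Algebra k S]

theorem map_mem_span_of_mem_ideal_span {R : Subalgebra k S} {ρ : S →ₗ[k] S}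
    (hρR : ∀ s, ρ s ∈ R) (hρlin : ∀ r ∈ R, ∀ s, ρ (r * s) = r * ρ s) {T : Set S} (hTR : T ⊆ R)
    {s : S} (hs : s ∈ Ideal.span T) : ρ s ∈ Submodule.span R T := by
  obtain ⟨n, f, g, rfl⟩ := Submodule.mem_span_set'.mp hs
  rw [map_sum]
  refine Submodule.sum_mem _ fun i _ => ?_
  have hρ : ρ (f i • (g i : S)) = (⟨ρ (f i), hρR _⟩ : R) • (g i : S) := by
    rw [smul_eq_mul, mul_comm, hρlin _ (hTR (g i).2), mul_comm]; rfl
  rw [hρ]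
  exact Submodule.smul_mem _ _ (Submodule.subset_span (g i).2)

variable (𝒜 : ℕ → Submodule k S) [GradedAlgebra 𝒜]

theorem Subalgebra.le_adjoin_of_homogeneous_mem_span (h𝒜₀ : 𝒜 0 ≤ 1) {R : Subalgebra k S}
    (hR : SetLike.IsHomogeneous 𝒜 R) {T : Set S} (hT : ∀ t ∈ T, ∃ e, 0 < e ∧ t ∈ 𝒜 e)
    (hspan : ∀ d, 0 < d → ∀ r ∈ R, r ∈ 𝒜 d → r ∈ Submodule.span R T) :
    R ≤ Algebra.adjoin k T := by
  classical
  suffices hom : ∀ d, ∀ r ∈ R, r ∈ 𝒜 d → r ∈ Algebra.adjoin k T by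
    intro r hr
    rw [← sum_support_decompose 𝒜 r]
    exact sum_mem fun d _ => hom d _ (hR d hr) (decompose 𝒜 r d).2
  refine fun d => Nat.strong_induction_on d fun d ih r hr hrd => ?_
  rcases Nat.eq_zero_or_pos d with rfl | hd
  · obtain ⟨c, rfl⟩ := Submodule.mem_one.mp (h𝒜₀ hrd)
    exact Subalgebra.algebraMap_mem _ c
  obtain ⟨n, f, g, hfg⟩ := Submodule.mem_span_set'.mp (hspan d hd r hr hrd)
  rw [← decompose_of_mem_same 𝒜 hrd, ← hfg, decompose_sum, DFinsupp.finsetSum_apply,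
    Submodule.coe_sum]
  refine Subalgebra.sum_mem _ fun i _ => ?_
  obtain ⟨e, he, hge⟩ := hT _ (g i).2
  rw [Subalgebra.smul_def, smul_eq_mul, mul_comm, coe_decompose_mul_of_left_mem 𝒜 d hge]
  split_ifs with hed
  · exact mul_mem (Algebra.subset_adjoin (g i).2)
      (ih (d - e) (by omega) _ (hR _ (f i).2) (decompose 𝒜 _ _).2)
  · exact zero_mem _

theorem Subalgebra.fg_of_reynolds [IsNoetherianRing S] (h𝒜₀ : 𝒜 0 ≤ 1) (R : Subalgebra k S)
    (ρ : S →ₗ[k] S) (hρR : ∀ s, ρ s ∈ R) (hρid : ∀ r ∈ R, ρ r = r)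
    (hρlin : ∀ r ∈ R, ∀ s, ρ (r * s) = r * ρ s) (hρhom : ∀ d, ∀ s ∈ 𝒜 d, ρ s ∈ 𝒜 d) :
    R.FG := by
  obtain ⟨T, hTA, hspan⟩ := (Submodule.fg_span_iff_fg_span_finset_subset
    {r | r ∈ R ∧ ∃ e, 0 < e ∧ r ∈ 𝒜 e}).mp (IsNoetherian.noetherian (Ideal.span _))
  have hR : SetLike.IsHomogeneous 𝒜 R :=
    Submodule.isHomogeneous_of_isProjection 𝒜 (p := Subalgebra.toSubmodule R) hρhom hρR hρid
  refine ⟨T, le_antisymm (Algebra.adjoin_le fun t ht => (hTA ht).1) ?_⟩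
  refine le_adjoin_of_homogeneous_mem_span 𝒜 h𝒜₀ hR (fun t ht => (hTA ht).2)
    fun d hd r hr hrd => ?_
  rw [← hρid r hr]
  exact map_mem_span_of_mem_ideal_span hρR hρlin (fun t ht => (hTA ht).1)
    (hspan.le (Submodule.subset_span ⟨hr, d, hd, hrd⟩))

end Graded

theorem hilbert_finiteness_via_reynolds (k : Type*) [Field k] (n : ℕ)
    (R : Subalgebra k (MvPolynomial (Fin n) k))
    (ρ : MvPolynomial (Fin n) k →ₗ[k] MvPolynomial (Fin n) k)
    (hρR : ∀ s : MvPolynomial (Fin n) k, ρ s ∈ R)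
    (hρid : ∀ r ∈ R, ρ r = r)
    (hρlin : ∀ r ∈ R, ∀ s : MvPolynomial (Fin n) k, ρ (r * s) = r * ρ s)
    (hρhom : ∀ (d : ℕ) (s : MvPolynomial (Fin n) k),
      s.IsHomogeneous d → (ρ s).IsHomogeneous d) :
    R.FG := by
  let := MvPolynomial.gradedAlgebra (σ := Fin n) (R := k)
  exact R.fg_of_reynolds _ (MvPolynomial.homogeneousSubmodule_zero (σ := Fin n) (R := k)).le ρ
    hρR hρid hρlin hρhom
end

section
/- Let k be a field, n a natural number, and S = k[x₁,…,xₙ] the polynomial ring with its standard grading. Let R ⊆ S be a k-subalgebra and let ρ : S → S be a k-linear map such that ρ(s) ∈ R for all s ∈ S, ρ(r) = r for all r ∈ R, ρ(r·s) = r·ρ(s) for all r ∈ R and s ∈ S, and ρ preserves homogeneous components of each degree. Let I ⊆ S be the ideal of S generated by the homogeneous elements of R of positive degree, and suppose f₁,…,f_r are homogeneous elements of R of positive degree that generate I as an ideal of S. Then R is generated as a k-algebra by f₁,…,f_r, i.e., R = k[f₁,…,f_r]. -/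
open MvPolynomial Finset

theorem invariants_generated_by_hilbert_ideal_generators (k : Type*) [Field k]
    (n r : ℕ) (R : Subalgebra k (MvPolynomial (Fin n) k))
    (ρ : MvPolynomial (Fin n) k →ₗ[k] MvPolynomial (Fin n) k)
    (hρR : ∀ s : MvPolynomial (Fin n) k, ρ s ∈ R)
    (hρid : ∀ x ∈ R, ρ x = x)
    (hρlin : ∀ x ∈ R, ∀ s : MvPolynomial (Fin n) k, ρ (x * s) = x * ρ s)
    (hρhom : ∀ (d : ℕ) (s : MvPolynomial (Fin n) k),
      s.IsHomogeneous d → (ρ s).IsHomogeneous d)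
    (f : Fin r → MvPolynomial (Fin n) k)
    (hfR : ∀ i, f i ∈ R)
    (hfhom : ∀ i, ∃ d : ℕ, 0 < d ∧ (f i).IsHomogeneous d)
    -- `f₁, …, f_r` generate the Hilbert ideal `I` of `S`
    (hI : Ideal.span (Set.range f) =
      Ideal.span {s : MvPolynomial (Fin n) k |
        s ∈ R ∧ ∃ d : ℕ, 0 < d ∧ s.IsHomogeneous d}) :
    R = Algebra.adjoin k (Set.range f) := by
  classical
  set A := Algebra.adjoin k (Set.range f) with hA
  have hAR : A ≤ R := Algebra.adjoin_le (by rintro _ ⟨i, rfl⟩; exact hfR i)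
  -- R is closed under taking homogeneous components
  have hcR : ∀ x ∈ R, ∀ d : ℕ, homogeneousComponent d x ∈ R := by
    intro x hx d
    have hx' : x = ∑ e ∈ Finset.range (x.totalDegree + 1),
        ρ (homogeneousComponent e x) := by
      conv_lhs => rw [← hρid x hx, ← sum_homogeneousComponent x]
      rw [map_sum]
    have hdec : homogeneousComponent d x
        = ∑ e ∈ Finset.range (x.totalDegree + 1),
            homogeneousComponent d (ρ (homogeneousComponent e x)) := by
      conv_lhs => rw [hx']
      rw [map_sum]
    rw [hdec]
    refine sum_mem fun e _ => ?_
    have he : (ρ (homogeneousComponent e x)).IsHomogeneous e :=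
      hρhom e _ (homogeneousComponent_isHomogeneous e x)
    rw [homogeneousComponent_of_mem ((mem_homogeneousSubmodule _ _).2 he)]
    split
    · exact hρR _
    · exact zero_mem _
  -- main claim by strong induction on the degree
  have key : ∀ d : ℕ, ∀ h : MvPolynomial (Fin n) k, h ∈ R → h.IsHomogeneous d →
      h ∈ A := by
    intro d
    induction d using Nat.strong_induction_on with
    | _ d IH =>
      intro h hR hhom
      rcases Nat.eq_zero_or_pos d with rfl | hd
      · -- degree 0 : constant
        have : h = C (coeff 0 h) := by
          ext m
          rw [coeff_C]
          split
          · next hm => rw [← hm]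
          · next hm =>
            exact hhom.coeff_eq_zero
              (fun h0 => hm ((Finsupp.degree_eq_zero_iff m).1 h0).symm)
        rw [this]
        exact Subalgebra.algebraMap_mem A (coeff 0 h)
      · -- positive degree : use the generators of the Hilbert ideal
        have hmem : h ∈ Ideal.span (Set.range f) := by
          rw [hI]; exact Ideal.subset_span ⟨hR, d, hd, hhom⟩
        obtain ⟨c, hc⟩ := Submodule.mem_span_range_iff_exists_fun _ |>.1 hmem
        have h1 : h = ∑ i, f i * ρ (c i) := by
          calc h = ρ h := (hρid h hR).symm
          _ = ρ (∑ i, f i * c i) := by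
              rw [← hc]; congr 1; refine Finset.sum_congr rfl fun i _ => ?_
              rw [smul_eq_mul, mul_comm]
          _ = ∑ i, ρ (f i * c i) := map_sum ρ _ _
          _ = ∑ i, f i * ρ (c i) := Finset.sum_congr rfl fun i _ =>
              hρlin (f i) (hfR i) (c i)
        have h2 : h = ∑ i, ∑ e ∈ Finset.range ((ρ (c i)).totalDegree + 1),
            f i * homogeneousComponent e (ρ (c i)) := by
          rw [h1]
          refine Finset.sum_congr rfl fun i _ => ?_
          rw [← Finset.mul_sum, sum_homogeneousComponent]
        have h3 : h = ∑ i, ∑ e ∈ Finset.range ((ρ (c i)).totalDegree + 1),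
            homogeneousComponent d (f i * homogeneousComponent e (ρ (c i))) := by
          conv_lhs =>
            rw [show h = homogeneousComponent d h from
              (homogeneousComponent_of_mem
                ((mem_homogeneousSubmodule _ _).2 hhom)).trans (if_pos rfl) |>.symm]
            rw [h2]
          rw [map_sum]
          exact Finset.sum_congr rfl fun i _ => map_sum _ _ _
        rw [h3]
        refine sum_mem fun i _ => sum_mem fun e _ => ?_
        obtain ⟨di, hdi, hfi⟩ := hfhom i
        have hq : (homogeneousComponent e (ρ (c i))).IsHomogeneous e :=
          homogeneousComponent_isHomogeneous e _
        have hprod : (f i * homogeneousComponent e (ρ (c i))).IsHomogeneous (di + e) :=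
          hfi.mul hq
        rw [homogeneousComponent_of_mem ((mem_homogeneousSubmodule _ _).2 hprod)]
        split
        · next heq =>
          have hlt : e < d := by omega
          exact mul_mem (Algebra.subset_adjoin ⟨i, rfl⟩)
            (IH e hlt _ (hcR _ (hρR (c i)) e) hq)
        · exact zero_mem _
  refine le_antisymm ?_ hAR
  intro x hx
  rw [← sum_homogeneousComponent x]
  exact sum_mem fun e _ => key e _ (hcR x hx e) (homogeneousComponent_isHomogeneous e x)
end

section
/- Let A be a bialgebra over a commutative ring R with comultiplication Δ, let x ∈ A be a grouplike element, and write Lₓ : A → A for left multiplication by x. Let Ω : A → A be an R-linear map satisfying (Ω ⊗ id) ∘ Δ = (id ⊗ Lₓ) ∘ Δ ∘ Ω and (id ⊗ Ω) ∘ Δ = (Lₓ ⊗ id) ∘ Δ ∘ Ω (an Ω-process associated to x). Then the map Λ := Lₓ ∘ Ω (i.e., a ↦ x·Ω(a)) satisfies Δ ∘ Λ = (id ⊗ Λ) ∘ Δ and Δ ∘ Λ = (Λ ⊗ id) ∘ Δ; that is, Λ is simultaneously a morphism for the left and the right coactions of A on itself (a morphism of left and right G-modules, for G = Spec A). -/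
open TensorProduct

/-! Since `Δ` is multiplicative and `x` is grouplike, `Δ ∘ Lₓ = (Lₓ ⊗ Lₓ) ∘ Δ`. Splitting
`Lₓ ⊗ Lₓ = (id ⊗ Lₓ) ∘ (Lₓ ⊗ id)` and applying the second Ω-process identity to the inner
factor gives `Δ ∘ Lₓ ∘ Ω = (id ⊗ Lₓ) ∘ (id ⊗ Ω) ∘ Δ`; the other equivariance is symmetric. -/

lemma comul_comp_mulLeft_of_comul_eq_tmul_self {R A : Type*} [CommSemiring R] [Semiring A]
    [Bialgebra R A] {x : A} (hx : Coalgebra.comul (R := R) x = x ⊗ₜ[R] x) :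
    Coalgebra.comul ∘ₗ LinearMap.mulLeft R x =
      map (LinearMap.mulLeft R x) (LinearMap.mulLeft R x) ∘ₗ Coalgebra.comul := by
  ext a
  simp [hx, ← LinearMap.mulLeft_tmul]

section CoalgebraStruct

variable {R A : Type*} [CommSemiring R] [AddCommMonoid A] [Module R A] [CoalgebraStruct R A]
  {L Ω : A →ₗ[R] A}

lemma comul_comp_comp_eq_map_id_comp_comul
    (hL : Coalgebra.comul ∘ₗ L = map L L ∘ₗ Coalgebra.comul)
    (hΩ : map LinearMap.id Ω ∘ₗ Coalgebra.comul = map L LinearMap.id ∘ₗ Coalgebra.comul ∘ₗ Ω) :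
    Coalgebra.comul ∘ₗ (L ∘ₗ Ω) = map LinearMap.id (L ∘ₗ Ω) ∘ₗ Coalgebra.comul := by
  calc Coalgebra.comul ∘ₗ (L ∘ₗ Ω)
      = map LinearMap.id L ∘ₗ (map L LinearMap.id ∘ₗ Coalgebra.comul ∘ₗ Ω) := by
        rw [← LinearMap.comp_assoc, hL]
        simp only [← LinearMap.comp_assoc, ← map_comp, LinearMap.id_comp, LinearMap.comp_id]
    _ = map LinearMap.id (L ∘ₗ Ω) ∘ₗ Coalgebra.comul := by
        rw [← hΩ, ← LinearMap.comp_assoc, ← map_comp, LinearMap.id_comp]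

lemma comul_comp_comp_eq_map_comp_id_comp_comul
    (hL : Coalgebra.comul ∘ₗ L = map L L ∘ₗ Coalgebra.comul)
    (hΩ : map Ω LinearMap.id ∘ₗ Coalgebra.comul = map LinearMap.id L ∘ₗ Coalgebra.comul ∘ₗ Ω) :
    Coalgebra.comul ∘ₗ (L ∘ₗ Ω) = map (L ∘ₗ Ω) LinearMap.id ∘ₗ Coalgebra.comul := by
  calc Coalgebra.comul ∘ₗ (L ∘ₗ Ω)
      = map L LinearMap.id ∘ₗ (map LinearMap.id L ∘ₗ Coalgebra.comul ∘ₗ Ω) := by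
        rw [← LinearMap.comp_assoc, hL]
        simp only [← LinearMap.comp_assoc, ← map_comp, LinearMap.id_comp, LinearMap.comp_id]
    _ = map (L ∘ₗ Ω) LinearMap.id ∘ₗ Coalgebra.comul := by
        rw [← hΩ, ← LinearMap.comp_assoc, ← map_comp, LinearMap.id_comp]

end CoalgebraStruct

theorem omega_process_equivariant {R A : Type*} [CommRing R] [Ring A] [Bialgebra R A]
    (x : A) (hx : IsGroupLikeElem' R x) (Ω : A →ₗ[R] A)
    -- `Ω` is an `Ω`-process associated to `x`:
    -- `(Ω ⊗ id) ∘ Δ = (id ⊗ Lₓ) ∘ Δ ∘ Ω`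
    (hΩ₁ : TensorProduct.map Ω LinearMap.id ∘ₗ Coalgebra.comul =
      TensorProduct.map LinearMap.id (LinearMap.mulLeft R x) ∘ₗ Coalgebra.comul ∘ₗ Ω)
    -- `(id ⊗ Ω) ∘ Δ = (Lₓ ⊗ id) ∘ Δ ∘ Ω`
    (hΩ₂ : TensorProduct.map LinearMap.id Ω ∘ₗ Coalgebra.comul =
      TensorProduct.map (LinearMap.mulLeft R x) LinearMap.id ∘ₗ Coalgebra.comul ∘ₗ Ω) :
    -- `Λ := Lₓ ∘ Ω` satisfies `Δ ∘ Λ = (id ⊗ Λ) ∘ Δ` and `Δ ∘ Λ = (Λ ⊗ id) ∘ Δ`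
    Coalgebra.comul ∘ₗ (LinearMap.mulLeft R x ∘ₗ Ω) =
      TensorProduct.map LinearMap.id (LinearMap.mulLeft R x ∘ₗ Ω) ∘ₗ Coalgebra.comul ∧
    Coalgebra.comul ∘ₗ (LinearMap.mulLeft R x ∘ₗ Ω) =
      TensorProduct.map (LinearMap.mulLeft R x ∘ₗ Ω) LinearMap.id ∘ₗ Coalgebra.comul := by
  have hL := comul_comp_mulLeft_of_comul_eq_tmul_self hx.1
  exact ⟨comul_comp_comp_eq_map_id_comp_comul hL hΩ₂,
    comul_comp_comp_eq_map_comp_id_comp_comul hL hΩ₁⟩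
end
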